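/- arXiv:2006.07998 — 3 statements merged into one kernel-verified Lean document; each statement's English description precedes it below -/
import Mathlib

section
/- Let P and Q be aperiodic irreducible row-stochastic matrices and let R be a transition coupling of P and Q lying in the relative interior of the polytope of transition couplings Π_TC(P,Q). Then R(s,s') > 0 whenever (P ⊗ Q)(s,s') > 0; consequently there exists a > 0 with a·(P⊗Q) ≤ R entrywise, and R is aperiodic and irreducible. -/
open Finset

/-- The independent (tensor product) transition coupling of `P` and `Q`. -/
def indepCoupling {d e : ℕ} (P : Matrix (Fin d) (Fin d) ℝ) (Q : Matrix (Fin e) (Fin e) ℝ) :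
    Matrix (Fin d × Fin e) (Fin d × Fin e) ℝ :=
  Matrix.of fun s s' => P s.1 s'.1 * Q s.2 s'.2

/-- The polytope of transition couplings of `P` and `Q`. -/
def PiTC {d e : ℕ} (P : Matrix (Fin d) (Fin d) ℝ) (Q : Matrix (Fin e) (Fin e) ℝ) :
    Set (Matrix (Fin d × Fin e) (Fin d × Fin e) ℝ) :=
  {R | (∀ s s', 0 ≤ R s s') ∧
    (∀ x y x', ∑ y', R (x, y) (x', y') = P x x') ∧
    (∀ x y y', ∑ x', R (x, y) (x', y') = Q y y')}

def MatIrreducible {S : Type*} [Fintype S] [DecidableEq S] (U : Matrix S S ℝ) : Prop :=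
  ∀ s s' : S, ∃ k : ℕ, 1 ≤ k ∧ 0 < (U ^ k) s s'

def MatAperiodic {S : Type*} [Fintype S] [DecidableEq S] (U : Matrix S S ℝ) : Prop :=
  ∀ s : S, ∀ m : ℕ, (∀ k : ℕ, 1 ≤ k → 0 < (U ^ k) s s → m ∣ k) → m = 1

/-! If `R` vanished at an entry where `P ⊗ Q` is positive, then extrapolating from `P ⊗ Q`
through `R` slightly beyond `R` would stay in the affine hull of `Π_TC(P, Q)` and close to `R`, yet
have a negative entry. Hence `R` dominates `a • (P ⊗ Q)` for some `a > 0`, and `R ^ k` dominates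
`a ^ k • (P ^ k ⊗ Q ^ k)`. Since the return times of an aperiodic chain to a state form an
additive semigroup of gcd one, they contain all large integers; so irreducible aperiodic `P` and
`Q` have entrywise positive `k`-th powers for all large `k`, hence so does `R`, which is therefore
irreducible and aperiodic. -/

open Filter Topology
open scoped Kronecker

theorem Nat.exists_forall_ge_mem_of_add_mem {S : Set ℕ} (hadd : ∀ a ∈ S, ∀ b ∈ S, a + b ∈ S)
    (hgcd : ∀ m : ℕ, (∀ k ∈ S, m ∣ k) → m = 1) : ∀ᶠ n in atTop, n ∈ S := by
  obtain ⟨N, hN⟩ := Nat.exists_mem_closure_of_ge S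
  have hS : Nat.setGcd S = 1 := hgcd _ fun k hk => Nat.setGcd_dvd_of_mem hk
  have hclosure : ∀ n ∈ AddSubmonoid.closure S, n = 0 ∨ n ∈ S := fun n hn =>
    AddSubmonoid.closure_induction (fun k hk => .inr hk) (.inl rfl)
      (fun a b _ _ ha hb => by
        rcases ha with rfl | ha
        · simpa using hb
        rcases hb with rfl | hb
        · simpa using Or.inr ha
        exact .inr (hadd a ha b hb)) hn
  filter_upwards [eventually_ge_atTop N, eventually_ge_atTop 1] with n hNn hn
  exact (hclosure n (hN n hNn (hS ▸ one_dvd n))).resolve_left (by omega)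

namespace Matrix

variable {S α : Type*} [Fintype S] [DecidableEq S]

theorem pow_apply_le_pow_apply [Semiring α] [PartialOrder α] [IsOrderedRing α]
    {A B : Matrix S S α} (hA : ∀ i j, 0 ≤ A i j) (hAB : ∀ i j, A i j ≤ B i j) (k : ℕ) (i j : S) :
    (A ^ k) i j ≤ (B ^ k) i j := by
  induction k generalizing j with
  | zero => rfl
  | succ k ih =>
    rw [pow_succ, pow_succ, mul_apply, mul_apply]
    exact sum_le_sum fun l _ => mul_le_mul (ih l) (hAB l j) (hA l j)
      (pow_apply_nonneg (fun i j => (hA i j).trans (hAB i j)) k i l)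

theorem pow_apply_mul_pow_apply_le [Semiring α] [PartialOrder α] [IsOrderedRing α]
    {A : Matrix S S α} (hA : ∀ i j, 0 ≤ A i j) (k l : ℕ) (a b c : S) :
    (A ^ k) a b * (A ^ l) b c ≤ (A ^ (k + l)) a c := by
  rw [pow_add, mul_apply]
  exact single_le_sum (fun t _ => mul_nonneg (pow_apply_nonneg hA k a t)
    (pow_apply_nonneg hA l t c)) (mem_univ b)

theorem kronecker_pow {m n : Type*} [Fintype m] [DecidableEq m] [Fintype n] [DecidableEq n]
    [CommSemiring α] (A : Matrix m m α) (B : Matrix n n α) (k : ℕ) :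
    (A ⊗ₖ B) ^ k = (A ^ k) ⊗ₖ (B ^ k) := by
  induction k with
  | zero => rw [pow_zero, pow_zero, pow_zero, one_kronecker_one]
  | succ k ih => rw [pow_succ, ih, ← mul_kronecker_mul, pow_succ, pow_succ]

end Matrix

section Powers

variable {S : Type*} [Fintype S] [DecidableEq S] {U : Matrix S S ℝ}

theorem MatAperiodic.eventually_pow_apply_self_pos (hU : ∀ i j, 0 ≤ U i j) (hap : MatAperiodic U)
    (s : S) : ∀ᶠ k in atTop, 0 < (U ^ k) s s := by
  have hS := Nat.exists_forall_ge_mem_of_add_mem (S := {k | 1 ≤ k ∧ 0 < (U ^ k) s s})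
    (fun k ⟨hk, hks⟩ l ⟨hl, hls⟩ => ⟨by omega,
      (mul_pos hks hls).trans_le (Matrix.pow_apply_mul_pow_apply_le hU k l s s s)⟩)
    (fun m hm => hap s m fun k hk hks => hm k ⟨hk, hks⟩)
  exact hS.mono fun k hk => hk.2

theorem MatIrreducible.eventually_pow_apply_pos (hU : ∀ i j, 0 ≤ U i j) (hirr : MatIrreducible U)
    (hap : MatAperiodic U) (s s' : S) : ∀ᶠ k in atTop, 0 < (U ^ k) s s' := by
  obtain ⟨m, -, hm⟩ := hirr s s'
  filter_upwards [(tendsto_sub_atTop_nat m).eventually (hap.eventually_pow_apply_self_pos hU s),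
    eventually_ge_atTop m] with k hk hmk
  calc 0 < (U ^ (k - m)) s s * (U ^ m) s s' := mul_pos hk hm
    _ ≤ (U ^ (k - m + m)) s s' := Matrix.pow_apply_mul_pow_apply_le hU _ _ s s s'
    _ = (U ^ k) s s' := by rw [Nat.sub_add_cancel hmk]

theorem MatIrreducible.of_eventually_pow_apply_pos
    (h : ∀ s s', ∀ᶠ k in atTop, 0 < (U ^ k) s s') : MatIrreducible U := fun s s' =>
  ((h s s').and (eventually_ge_atTop 1)).exists.imp fun _ hk => ⟨hk.2, hk.1⟩

theorem MatAperiodic.of_eventually_pow_apply_self_pos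
    (h : ∀ s, ∀ᶠ k in atTop, 0 < (U ^ k) s s) : MatAperiodic U := by
  intro s m hm
  obtain ⟨k, hk, hk1, hk1'⟩ := ((h s).and ((eventually_ge_atTop 1).and
    ((tendsto_add_atTop_nat 1).eventually (h s)))).exists
  simpa using Nat.dvd_sub (hm (k + 1) (by omega) hk1') (hm k hk1 hk)

end Powers

section RelInterior

variable {ι κ : Type*}

def IsRelInteriorPoint (C : Set (Matrix ι κ ℝ)) (R : Matrix ι κ ℝ) : Prop :=
  ∃ ε > (0 : ℝ), ∀ R' : Matrix ι κ ℝ,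
    (∀ i j, |R' i j - R i j| < ε) → R' ∈ affineSpan ℝ C → R' ∈ C

variable [Finite ι] [Finite κ]

theorem IsRelInteriorPoint.pos_apply_of_pos_apply {C : Set (Matrix ι κ ℝ)}
    (hC : ∀ M ∈ C, ∀ i j, 0 ≤ M i j) {R M : Matrix ι κ ℝ} (hri : IsRelInteriorPoint C R)
    (hR : R ∈ C) (hM : M ∈ C) {i j} (hMij : 0 < M i j) : 0 < R i j := by
  obtain ⟨ε, hε, hball⟩ := hri
  by_contra hRij
  replace hRij : R i j = 0 := le_antisymm (not_lt.1 hRij) (hC R hR i j)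
  have hsmall : ∀ᶠ t in 𝓝[>] (0 : ℝ), ∀ i j, |t * (R i j - M i j)| < ε := by
    refine eventually_all.2 fun i => eventually_all.2 fun j => ?_
    have : Tendsto (fun t : ℝ => t * (R i j - M i j)) (𝓝[>] 0) (𝓝 0) :=
      tendsto_nhdsWithin_of_tendsto_nhds ((continuous_mul_const _).tendsto' 0 0 (zero_mul _))
    simpa [Real.dist_eq] using Metric.tendsto_nhds.1 this ε hε
  obtain ⟨t, hsmall, ht : 0 < t⟩ := (hsmall.and self_mem_nhdsWithin).exists
  set R' := AffineMap.lineMap M R (1 + t)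
  have hR' : ∀ i j, R' i j = R i j + t * (R i j - M i j) := by
    intro i j
    simp only [R', AffineMap.lineMap_apply_module, sub_add_cancel_left, neg_smul, Matrix.add_apply,
      Matrix.neg_apply, Matrix.smul_apply, smul_eq_mul]
    ring
  have hR'C : R' ∈ C := hball R' (fun i j => by rw [hR', add_sub_cancel_left]; exact hsmall i j)
    (AffineMap.lineMap_mem _ (subset_affineSpan ℝ C hM) (subset_affineSpan ℝ C hR))
  have := hC R' hR'C i j
  rw [hR', hRij] at this
  linarith [mul_pos ht hMij]

theorem exists_pos_mul_le_of_pos_imp_pos {M R : Matrix ι κ ℝ}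
    (hR : ∀ i j, 0 ≤ R i j) (hMR : ∀ i j, 0 < M i j → 0 < R i j) :
    ∃ a > (0 : ℝ), ∀ i j, a * M i j ≤ R i j := by
  have : ∀ᶠ a in 𝓝[>] (0 : ℝ), ∀ i j, a * M i j ≤ R i j := by
    refine eventually_all.2 fun i => eventually_all.2 fun j => ?_
    rcases lt_or_ge 0 (M i j) with hM | hM
    · filter_upwards [nhdsWithin_le_nhds (eventually_lt_nhds (div_pos (hMR i j hM) hM))]
        with a ha using ((lt_div_iff₀ hM).1 ha).le
    · filter_upwards [self_mem_nhdsWithin] with a (ha : 0 < a)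
      exact (mul_nonpos_of_nonneg_of_nonpos ha.le hM).trans (hR i j)
  exact (this.and self_mem_nhdsWithin).exists.imp fun a ha => ⟨ha.2, ha.1⟩

end RelInterior

section IndepCoupling

variable {d e : ℕ} {P : Matrix (Fin d) (Fin d) ℝ} {Q : Matrix (Fin e) (Fin e) ℝ}

theorem indepCoupling_mem_PiTC (hP : (∀ x x', 0 ≤ P x x') ∧ ∀ x, ∑ x', P x x' = 1)
    (hQ : (∀ y y', 0 ≤ Q y y') ∧ ∀ y, ∑ y', Q y y' = 1) : indepCoupling P Q ∈ PiTC P Q :=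
  ⟨fun s s' => mul_nonneg (hP.1 _ _) (hQ.1 _ _),
    fun x y x' => by simp only [indepCoupling, Matrix.of_apply, ← mul_sum, hQ.2, mul_one],
    fun x y y' => by simp only [indepCoupling, Matrix.of_apply, ← sum_mul, hP.2, one_mul]⟩

theorem indepCoupling_pow (k : ℕ) : indepCoupling P Q ^ k = indepCoupling (P ^ k) (Q ^ k) :=
  Matrix.kronecker_pow P Q k

end IndepCoupling

/-- a transition coupling in the relative interior of `Π_TC(P,Q)` dominates a
positive multiple of the independent coupling and is aperiodic and irreducible. -/
theorem stmt_4 (d e : ℕ)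
    (P : Matrix (Fin d) (Fin d) ℝ) (Q : Matrix (Fin e) (Fin e) ℝ)
    (hP : (∀ x x', 0 ≤ P x x') ∧ ∀ x, ∑ x', P x x' = 1)
    (hQ : (∀ y y', 0 ≤ Q y y') ∧ ∀ y, ∑ y', Q y y' = 1)
    (hPirr : MatIrreducible P) (hPap : MatAperiodic P)
    (hQirr : MatIrreducible Q) (hQap : MatAperiodic Q)
    (R : Matrix (Fin d × Fin e) (Fin d × Fin e) ℝ)
    (hR : R ∈ PiTC P Q)
    (hri : ∃ ε > (0 : ℝ), ∀ R' : Matrix (Fin d × Fin e) (Fin d × Fin e) ℝ,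
      (∀ s s', |R' s s' - R s s'| < ε) → R' ∈ affineSpan ℝ (PiTC P Q) → R' ∈ PiTC P Q) :
    (∀ s s', 0 < indepCoupling P Q s s' → 0 < R s s') ∧
    (∃ a > (0 : ℝ), ∀ s s', a * indepCoupling P Q s s' ≤ R s s') ∧
    MatIrreducible R ∧ MatAperiodic R := by
  have hI := indepCoupling_mem_PiTC hP hQ
  have hpos : ∀ s s', 0 < indepCoupling P Q s s' → 0 < R s s' := fun _ _ =>
    IsRelInteriorPoint.pos_apply_of_pos_apply (fun _ hM => hM.1) hri hR hI
  obtain ⟨a, ha, hdom⟩ := exists_pos_mul_le_of_pos_imp_pos hR.1 hpos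
  have hev : ∀ s s', ∀ᶠ k in atTop, 0 < (R ^ k) s s' := by
    intro s s'
    filter_upwards [hPirr.eventually_pow_apply_pos hP.1 hPap s.1 s'.1,
      hQirr.eventually_pow_apply_pos hQ.1 hQap s.2 s'.2] with k hPk hQk
    calc 0 < a ^ k * ((P ^ k) s.1 s'.1 * (Q ^ k) s.2 s'.2) := by positivity
      _ = ((a • indepCoupling P Q) ^ k) s s' := by rw [smul_pow, indepCoupling_pow]; rfl
      _ ≤ (R ^ k) s s' := Matrix.pow_apply_le_pow_apply
          (fun s s' => mul_nonneg ha.le (hI.1 s s')) hdom k s s'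
  exact ⟨hpos, ⟨a, ha, hdom⟩, .of_eventually_pow_apply_pos hev,
    .of_eventually_pow_apply_self_pos fun s => hev s s⟩
end

section
/- Let R be a row-stochastic matrix on a finite set S of cardinality n, mixing with coefficients M and α ∈ [0,1) toward its unique stationary distribution λ. Let c : S → ℝ, g = (λ·c)·𝟙, and define the bias h = ∑_{t=0}^∞ R^t (c − g) and its truncation h' = ∑_{t=0}^T R^t (c − g). Then ‖h' − h‖₁ ≤ M ‖c‖_∞ n α^{T+1} / (1 − α). In particular, the infinite series defining h converges. -/
/-!
Since every power `R ^ t` is row-stochastic, `R ^ t (c − g) = (R ^ t − R̄) c`, whose entries are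
bounded by `M ‖c‖ α ^ t` by the mixing hypothesis. The bias series is therefore dominated
coordinatewise by a geometric series, and the tail after `T` is at most `M ‖c‖ α ^ (T + 1) / (1 − α)`
in each of the `n` coordinates.
-/

open Finset
open scoped Matrix

theorem Matrix.sum_pow_apply_eq_one {ι R : Type*} [Fintype ι] [DecidableEq ι] [Semiring R]
    {A : Matrix ι ι R} (hA : ∀ i, ∑ j, A i j = 1) (t : ℕ) (i : ι) :
    ∑ j, (A ^ t) i j = 1 := by
  have hrow (B : Matrix ι ι R) (i : ι) : (B *ᵥ 1) i = ∑ j, B i j := by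
    simp [Matrix.mulVec, dotProduct]
  have hfix : A *ᵥ 1 = 1 := funext fun i => by rw [hrow, hA, Pi.one_apply]
  have hpow : (A ^ t) *ᵥ 1 = 1 := by
    induction t with
    | zero => simp
    | succ t ih => rw [pow_succ, ← Matrix.mulVec_mulVec, hfix, ih]
  rw [← hrow, hpow, Pi.one_apply]

theorem sum_mul_sub_weighted_sum {ι R : Type*} [Fintype ι] [CommRing R] {a : ι → R}
    (ha : ∑ j, a j = 1) (w c : ι → R) :
    ∑ j, a j * (c j - ∑ k, w k * c k) = ∑ j, (a j - w j) * c j := by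
  simp only [mul_sub, sub_mul, sum_sub_distrib, ← sum_mul, ha, one_mul]

theorem abs_sum_mul_le_sum_abs_mul_norm {ι : Type*} [Fintype ι] (a c : ι → ℝ) :
    |∑ j, a j * c j| ≤ (∑ j, |a j|) * ‖c‖ := by
  calc |∑ j, a j * c j| ≤ ∑ j, |a j| * |c j| := by
        simpa only [abs_mul] using abs_sum_le_sum_abs (fun j => a j * c j) univ
    _ ≤ ∑ j, |a j| * ‖c‖ := by
        gcongr with j
        simpa only [Real.norm_eq_abs] using norm_le_pi_norm c j
    _ = (∑ j, |a j|) * ‖c‖ := (sum_mul ..).symm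

theorem abs_sum_range_sub_le_of_abs_le_geometric {u : ℕ → ℝ} {a b r : ℝ} (hr : r < 1)
    (hu : ∀ t, |u t| ≤ b * r ^ t) (ha : HasSum u a) (T : ℕ) :
    |(∑ t ∈ range T, u t) - a| ≤ b * r ^ T / (1 - r) := by
  have hstep (t : ℕ) : dist (∑ i ∈ range t, u i) (∑ i ∈ range (t + 1), u i) ≤ b * r ^ t := by
    simpa [Real.dist_eq, sum_range_succ] using hu t
  simpa only [Real.dist_eq] using
    dist_le_of_le_geometric_of_tendsto r b hr hstep ha.tendsto_sum_nat T

theorem stmt_6_general (n : ℕ)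
    (R : Matrix (Fin n) (Fin n) ℝ)
    (hR : (∀ s s', 0 ≤ R s s') ∧ ∀ s, ∑ s', R s s' = 1)
    (lam : Fin n → ℝ)
    (M α : ℝ) (hα : 0 ≤ α ∧ α < 1)
    (hmix : ∀ t : ℕ, ∀ s, ∑ s', |(R ^ t) s s' - lam s'| ≤ M * α ^ t)
    (c : Fin n → ℝ) :
    ∃ h : Fin n → ℝ,
      (∀ s, HasSum (fun t : ℕ => ∑ s', (R ^ t) s s' * (c s' - ∑ u, lam u * c u)) (h s)) ∧
      ∀ T : ℕ,
        ∑ s, |(∑ t ∈ Finset.range (T + 1), ∑ s', (R ^ t) s s' * (c s' - ∑ u, lam u * c u)) - h s|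
          ≤ M * ‖c‖ * n * α ^ (T + 1) / (1 - α) := by
  obtain ⟨hα0, hα1⟩ := hα
  set f : Fin n → ℕ → ℝ := fun s t => ∑ s', (R ^ t) s s' * (c s' - ∑ u, lam u * c u)
  have hf (s : Fin n) (t : ℕ) : |f s t| ≤ M * ‖c‖ * α ^ t := by
    calc |f s t| = |∑ s', ((R ^ t) s s' - lam s') * c s'| := 
          congrArg abs (sum_mul_sub_weighted_sum (Matrix.sum_pow_apply_eq_one hR.2 t s) lam c)
      _ ≤ (∑ s', |(R ^ t) s s' - lam s'|) * ‖c‖ := abs_sum_mul_le_sum_abs_mul_norm _ _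
      _ ≤ M * α ^ t * ‖c‖ := by gcongr; exact hmix t s
      _ = M * ‖c‖ * α ^ t := by ring
  have hsum (s : Fin n) : HasSum (f s) (∑' t, f s t) :=
    (((summable_geometric_of_lt_one hα0 hα1).mul_left _).of_norm_bounded
      fun t => (Real.norm_eq_abs _).trans_le (hf s t)).hasSum
  refine ⟨fun s => ∑' t, f s t, hsum, fun T => ?_⟩
  calc ∑ s, |(∑ t ∈ range (T + 1), f s t) - ∑' t, f s t|
      ≤ ∑ _s : Fin n, M * ‖c‖ * α ^ (T + 1) / (1 - α) :=
        sum_le_sum fun s _ => abs_sum_range_sub_le_of_abs_le_geometric hα1 (hf s) (hsum s) _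
    _ = M * ‖c‖ * n * α ^ (T + 1) / (1 - α) := by
        rw [sum_const, card_univ, Fintype.card_fin, nsmul_eq_mul]
        ring

/-- the bias series `h = ∑_{t≥0} R^t (c − g)` converges, and its truncation
`h' = ∑_{t=0}^T R^t (c − g)` satisfies `‖h' − h‖₁ ≤ M ‖c‖_∞ n α^{T+1} / (1 − α)`. -/
theorem stmt_6 (n : ℕ)
    (R : Matrix (Fin n) (Fin n) ℝ)
    (hR : (∀ s s', 0 ≤ R s s') ∧ ∀ s, ∑ s', R s s' = 1)
    (lam : Fin n → ℝ)
    (hlam : (∀ s, 0 ≤ lam s) ∧ ∑ s, lam s = 1)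
    (hstat : ∀ s', ∑ s, lam s * R s s' = lam s')
    (huniq : ∀ lam' : Fin n → ℝ, (∀ s, 0 ≤ lam' s) → (∑ s, lam' s = 1) →
      (∀ s', ∑ s, lam' s * R s s' = lam' s') → lam' = lam)
    (M α : ℝ) (hM : 0 ≤ M) (hα : 0 ≤ α ∧ α < 1)
    (hmix : ∀ t : ℕ, ∀ s, ∑ s', |(R ^ t) s s' - lam s'| ≤ M * α ^ t)
    (c : Fin n → ℝ) :
    ∃ h : Fin n → ℝ,
      (∀ s, HasSum (fun t : ℕ => ∑ s', (R ^ t) s s' * (c s' - ∑ u, lam u * c u)) (h s)) ∧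
      ∀ T : ℕ,
        ∑ s, |(∑ t ∈ Finset.range (T + 1), ∑ s', (R ^ t) s s' * (c s' - ∑ u, lam u * c u)) - h s|
          ≤ M * ‖c‖ * n * α ^ (T + 1) / (1 - α) :=
  stmt_6_general n R hR lam M α hα hmix c
end

section
/- Gluing lemma for transition couplings: Let P₁, P₂, P₃ be row-stochastic matrices on a finite set X, let R₁₂ be a transition coupling of P₁ and P₂ and R₂₃ a transition coupling of P₂ and P₃. Then there exists a row-stochastic matrix R₁₂₃ on X³ such that each row R₁₂₃((x₁,x₂,x₃),·) is a three-way coupling of P₁(x₁,·), P₂(x₂,·), P₃(x₃,·), its (1,2)-marginal equals R₁₂((x₁,x₂),·) and its (2,3)-marginal equals R₂₃((x₂,x₃),·). Moreover, if P₁, P₂, P₃ are irreducible with unique stationary distributions p₁, p₂, p₃, then any stationary distribution λ of R₁₂₃ is a three-way coupling of p₁, p₂, p₃. -/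
/-!
Each row of the glued chain is the conditionally independent gluing of the two rows
`R₁₂((x₁,x₂),·)` and `R₂₃((x₂,x₃),·)` over their common marginal `P₂(x₂,·)`:
`R((x₁,x₂,x₃),(y₁,y₂,y₃)) = R₁₂((x₁,x₂),(y₁,y₂)) R₂₃((x₂,x₃),(y₂,y₃)) / P₂(x₂,y₂)`.
Each coordinate projection lumps `R` onto `Pᵢ`, so it pushes a stationary distribution of `R`
forward to a stationary distribution of `Pᵢ`, which uniqueness identifies with `pᵢ`.
-/

open Finset

section Glue

variable {α β γ : Type*} [Fintype α]

/-- No case split on `m b = 0` is needed: there `x / 0 = 0`, and when `m` is the common marginal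
of nonnegative `f` and `g`, `m b = 0` forces `f a b = g b c = 0` anyway. -/
noncomputable def glue (f : α → β → ℝ) (g : β → γ → ℝ) (m : β → ℝ) (a : α) (b : β) (c : γ) : ℝ :=
  f a b * g b c / m b

variable {f : α → β → ℝ} {g : β → γ → ℝ} {m : β → ℝ}

theorem glue_nonneg (hf_nonneg : ∀ a b, 0 ≤ f a b) (hg_nonneg : ∀ b c, 0 ≤ g b c)
    (hf : ∀ b, ∑ a, f a b = m b) (a : α) (b : β) (c : γ) : 0 ≤ glue f g m a b c :=
  div_nonneg (mul_nonneg (hf_nonneg a b) (hg_nonneg b c))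
    (hf b ▸ sum_nonneg fun a _ => hf_nonneg a b)

theorem sum_glue_right [Fintype γ] (hf_nonneg : ∀ a b, 0 ≤ f a b) (hf : ∀ b, ∑ a, f a b = m b)
    (hg : ∀ b, ∑ c, g b c = m b) (a : α) (b : β) : ∑ c, glue f g m a b c = f a b := by
  simp only [glue, ← sum_div, ← mul_sum, hg]
  by_cases hm : m b = 0
  · rw [← hf] at hm
    simp [(sum_eq_zero_iff_of_nonneg fun a _ => hf_nonneg a b).mp hm a (mem_univ a)]
  · exact mul_div_cancel_right₀ _ hm

theorem sum_glue_left [Fintype γ] (hg_nonneg : ∀ b c, 0 ≤ g b c) (hf : ∀ b, ∑ a, f a b = m b)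
    (hg : ∀ b, ∑ c, g b c = m b) (b : β) (c : γ) : ∑ a, glue f g m a b c = g b c := by
  simp only [glue, ← sum_div, ← sum_mul, hf]
  by_cases hm : m b = 0
  · rw [← hg] at hm
    simp [(sum_eq_zero_iff_of_nonneg fun c _ => hg_nonneg b c).mp hm c (mem_univ c)]
  · exact mul_div_cancel_left₀ _ hm

end Glue

section Pushforward

variable {σ τ : Type*} [Fintype σ] [DecidableEq τ]

def pushforward (π : σ → τ) (f : σ → ℝ) (y : τ) : ℝ :=
  ∑ s with π s = y, f s

theorem sum_pushforward [Fintype τ] (π : σ → τ) (f : σ → ℝ) :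
    ∑ y, pushforward π f y = ∑ s, f s :=
  sum_fiberwise univ π f

theorem pushforward_nonneg (π : σ → τ) {f : σ → ℝ} (hf : ∀ s, 0 ≤ f s) (y : τ) :
    0 ≤ pushforward π f y :=
  sum_nonneg fun s _ => hf s

theorem pushforward_stationary [Fintype τ] {π : σ → τ} {R : σ → σ → ℝ} {P : τ → τ → ℝ}
    (hRP : ∀ s y, pushforward π (R s) y = P (π s) y) {lam : σ → ℝ}
    (hlam : ∀ t, ∑ s, lam s * R s t = lam t) (y : τ) :
    ∑ x, pushforward π lam x * P x y = pushforward π lam y := calc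
  ∑ x, pushforward π lam x * P x y = ∑ s, lam s * P (π s) y := by
    rw [← sum_fiberwise univ π]
    refine sum_congr rfl fun x _ => ?_
    rw [pushforward, sum_mul]
    exact sum_congr rfl fun s hs => by rw [(mem_filter.mp hs).2]
  _ = ∑ t with π t = y, ∑ s, lam s * R s t := by
    simp only [← hRP, pushforward, mul_sum]
    exact sum_comm
  _ = pushforward π lam y := sum_congr rfl fun t _ => hlam t

theorem pushforward_eq_of_stationary [Fintype τ] {π : σ → τ} {R : σ → σ → ℝ} {P : τ → τ → ℝ}
    (hRP : ∀ s y, pushforward π (R s) y = P (π s) y) {p : τ → ℝ}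
    (hp : ∀ p' : τ → ℝ, (∀ x, 0 ≤ p' x) → ∑ x, p' x = 1 → (∀ x', ∑ x, p' x * P x x' = p' x') →
      p' = p)
    {lam : σ → ℝ} (hlam_nonneg : ∀ s, 0 ≤ lam s) (hlam_sum : ∑ s, lam s = 1)
    (hlam : ∀ t, ∑ s, lam s * R s t = lam t) : pushforward π lam = p :=
  hp _ (pushforward_nonneg π hlam_nonneg) (by rw [sum_pushforward, hlam_sum])
    (pushforward_stationary hRP hlam)

end Pushforward

section TripleProduct

variable {α β γ : Type*} [Fintype α] [Fintype β] [Fintype γ] (f : α × β × γ → ℝ)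

theorem pushforward_fst [DecidableEq α] (a : α) :
    pushforward Prod.fst f a = ∑ b, ∑ c, f (a, b, c) := by
  rw [pushforward, sum_filter, Fintype.sum_prod_type,
    Fintype.sum_eq_single a fun x hx => by simp [hx]]
  simp [Fintype.sum_prod_type]

theorem pushforward_snd_fst [DecidableEq β] (b : β) :
    pushforward (fun s => s.2.1) f b = ∑ a, ∑ c, f (a, b, c) := by
  rw [pushforward, sum_filter, Fintype.sum_prod_type]
  refine sum_congr rfl fun a _ => ?_
  rw [Fintype.sum_prod_type, Fintype.sum_eq_single b fun x hx => by simp [hx]]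
  simp

theorem pushforward_snd_snd [DecidableEq γ] (c : γ) :
    pushforward (fun s => s.2.2) f c = ∑ a, ∑ b, f (a, b, c) := by
  simp_rw [pushforward, sum_filter, Fintype.sum_prod_type, Fintype.sum_ite_eq']

end TripleProduct

theorem stmt_10_general (d : ℕ)
    (P₁ P₂ P₃ : Fin d → Fin d → ℝ)
    (R₁₂ R₂₃ : Fin d × Fin d → Fin d × Fin d → ℝ)
    (hR₁₂ : (∀ s s', 0 ≤ R₁₂ s s') ∧
      (∀ x₁ x₂ x₁', ∑ x₂', R₁₂ (x₁, x₂) (x₁', x₂') = P₁ x₁ x₁') ∧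
      (∀ x₁ x₂ x₂', ∑ x₁', R₁₂ (x₁, x₂) (x₁', x₂') = P₂ x₂ x₂'))
    (hR₂₃ : (∀ s s', 0 ≤ R₂₃ s s') ∧
      (∀ x₂ x₃ x₂', ∑ x₃', R₂₃ (x₂, x₃) (x₂', x₃') = P₂ x₂ x₂') ∧
      (∀ x₂ x₃ x₃', ∑ x₂', R₂₃ (x₂, x₃) (x₂', x₃') = P₃ x₃ x₃')) :
    ∃ R : Fin d × Fin d × Fin d → Fin d × Fin d × Fin d → ℝ,
      (∀ s s', 0 ≤ R s s') ∧
      (∀ s x₁', ∑ x₂', ∑ x₃', R s (x₁', x₂', x₃') = P₁ s.1 x₁') ∧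
      (∀ s x₂', ∑ x₁', ∑ x₃', R s (x₁', x₂', x₃') = P₂ s.2.1 x₂') ∧
      (∀ s x₃', ∑ x₁', ∑ x₂', R s (x₁', x₂', x₃') = P₃ s.2.2 x₃') ∧
      (∀ s x₁' x₂', ∑ x₃', R s (x₁', x₂', x₃') = R₁₂ (s.1, s.2.1) (x₁', x₂')) ∧
      (∀ s x₂' x₃', ∑ x₁', R s (x₁', x₂', x₃') = R₂₃ (s.2.1, s.2.2) (x₂', x₃')) ∧
      (∀ p₁ p₂ p₃ : Fin d → ℝ,
        ((∀ x, 0 ≤ p₁ x) ∧ (∑ x, p₁ x = 1) ∧ (∀ x', ∑ x, p₁ x * P₁ x x' = p₁ x') ∧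
          ∀ p' : Fin d → ℝ, (∀ x, 0 ≤ p' x) → (∑ x, p' x = 1) →
            (∀ x', ∑ x, p' x * P₁ x x' = p' x') → p' = p₁) →
        ((∀ x, 0 ≤ p₂ x) ∧ (∑ x, p₂ x = 1) ∧ (∀ x', ∑ x, p₂ x * P₂ x x' = p₂ x') ∧
          ∀ p' : Fin d → ℝ, (∀ x, 0 ≤ p' x) → (∑ x, p' x = 1) →
            (∀ x', ∑ x, p' x * P₂ x x' = p' x') → p' = p₂) →
        ((∀ x, 0 ≤ p₃ x) ∧ (∑ x, p₃ x = 1) ∧ (∀ x', ∑ x, p₃ x * P₃ x x' = p₃ x') ∧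
          ∀ p' : Fin d → ℝ, (∀ x, 0 ≤ p' x) → (∑ x, p' x = 1) →
            (∀ x', ∑ x, p' x * P₃ x x' = p' x') → p' = p₃) →
        ∀ lam : Fin d × Fin d × Fin d → ℝ,
          (∀ s, 0 ≤ lam s) → (∑ s, lam s = 1) →
          (∀ s', ∑ s, lam s * R s s' = lam s') →
          (∀ x₁, ∑ x₂, ∑ x₃, lam (x₁, x₂, x₃) = p₁ x₁) ∧
          (∀ x₂, ∑ x₁, ∑ x₃, lam (x₁, x₂, x₃) = p₂ x₂) ∧
          (∀ x₃, ∑ x₁, ∑ x₂, lam (x₁, x₂, x₃) = p₃ x₃)) := by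
  obtain ⟨hR₁₂_nonneg, hR₁₂_fst, hR₁₂_snd⟩ := hR₁₂
  obtain ⟨hR₂₃_nonneg, hR₂₃_fst, hR₂₃_snd⟩ := hR₂₃
  set R : Fin d × Fin d × Fin d → Fin d × Fin d × Fin d → ℝ := fun s t =>
    glue (fun y₁ y₂ => R₁₂ (s.1, s.2.1) (y₁, y₂)) (fun y₂ y₃ => R₂₃ (s.2.1, s.2.2) (y₂, y₃))
      (P₂ s.2.1) t.1 t.2.1 t.2.2
  have hR_nonneg : ∀ s t, 0 ≤ R s t := fun s t =>
    glue_nonneg (fun _ _ => hR₁₂_nonneg _ _) (fun _ _ => hR₂₃_nonneg _ _) (hR₁₂_snd _ _) _ _ _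
  have hR₁₂_marg : ∀ s y₁ y₂, ∑ y₃, R s (y₁, y₂, y₃) = R₁₂ (s.1, s.2.1) (y₁, y₂) := fun s =>
    sum_glue_right (fun _ _ => hR₁₂_nonneg _ _) (hR₁₂_snd _ _) (hR₂₃_fst _ _)
  have hR₂₃_marg : ∀ s y₂ y₃, ∑ y₁, R s (y₁, y₂, y₃) = R₂₃ (s.2.1, s.2.2) (y₂, y₃) := fun s =>
    sum_glue_left (fun _ _ => hR₂₃_nonneg _ _) (hR₁₂_snd _ _) (hR₂₃_fst _ _)
  have hP₁ : ∀ s y₁, ∑ y₂, ∑ y₃, R s (y₁, y₂, y₃) = P₁ s.1 y₁ := fun s y₁ => by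
    simp_rw [hR₁₂_marg]
    exact hR₁₂_fst _ _ _
  have hP₂ : ∀ s y₂, ∑ y₁, ∑ y₃, R s (y₁, y₂, y₃) = P₂ s.2.1 y₂ := fun s y₂ => by
    simp_rw [hR₁₂_marg]
    exact hR₁₂_snd _ _ _
  have hP₃ : ∀ s y₃, ∑ y₁, ∑ y₂, R s (y₁, y₂, y₃) = P₃ s.2.2 y₃ := fun s y₃ => by
    rw [sum_comm]
    simp_rw [hR₂₃_marg]
    exact hR₂₃_snd _ _ _
  refine ⟨R, hR_nonneg, hP₁, hP₂, hP₃, hR₁₂_marg, hR₂₃_marg, ?_⟩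
  intro p₁ p₂ p₃ hp₁ hp₂ hp₃ lam hlam_nonneg hlam_sum hlam
  refine ⟨fun x₁ => ?_, fun x₂ => ?_, fun x₃ => ?_⟩
  · rw [← pushforward_fst, pushforward_eq_of_stationary
      (fun s y => (pushforward_fst (R s) y).trans (hP₁ s y)) hp₁.2.2.2
      hlam_nonneg hlam_sum hlam]
  · rw [← pushforward_snd_fst, pushforward_eq_of_stationary
      (fun s y => (pushforward_snd_fst (R s) y).trans (hP₂ s y)) hp₂.2.2.2
      hlam_nonneg hlam_sum hlam]
  · rw [← pushforward_snd_snd, pushforward_eq_of_stationary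
      (fun s y => (pushforward_snd_snd (R s) y).trans (hP₃ s y)) hp₃.2.2.2
      hlam_nonneg hlam_sum hlam]

/-- gluing lemma for transition couplings, together with the fact that any
stationary distribution of the glued chain is a three-way coupling of the unique stationary
distributions of the marginal chains. -/
theorem stmt_10 (d : ℕ)
    (P₁ P₂ P₃ : Fin d → Fin d → ℝ)
    (h₁ : (∀ x x', 0 ≤ P₁ x x') ∧ ∀ x, ∑ x', P₁ x x' = 1)
    (h₂ : (∀ x x', 0 ≤ P₂ x x') ∧ ∀ x, ∑ x', P₂ x x' = 1)
    (h₃ : (∀ x x', 0 ≤ P₃ x x') ∧ ∀ x, ∑ x', P₃ x x' = 1)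
    (R₁₂ R₂₃ : Fin d × Fin d → Fin d × Fin d → ℝ)
    (hR₁₂ : (∀ s s', 0 ≤ R₁₂ s s') ∧
      (∀ x₁ x₂ x₁', ∑ x₂', R₁₂ (x₁, x₂) (x₁', x₂') = P₁ x₁ x₁') ∧
      (∀ x₁ x₂ x₂', ∑ x₁', R₁₂ (x₁, x₂) (x₁', x₂') = P₂ x₂ x₂'))
    (hR₂₃ : (∀ s s', 0 ≤ R₂₃ s s') ∧
      (∀ x₂ x₃ x₂', ∑ x₃', R₂₃ (x₂, x₃) (x₂', x₃') = P₂ x₂ x₂') ∧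
      (∀ x₂ x₃ x₃', ∑ x₂', R₂₃ (x₂, x₃) (x₂', x₃') = P₃ x₃ x₃')) :
    ∃ R : Fin d × Fin d × Fin d → Fin d × Fin d × Fin d → ℝ,
      (∀ s s', 0 ≤ R s s') ∧
      (∀ s x₁', ∑ x₂', ∑ x₃', R s (x₁', x₂', x₃') = P₁ s.1 x₁') ∧
      (∀ s x₂', ∑ x₁', ∑ x₃', R s (x₁', x₂', x₃') = P₂ s.2.1 x₂') ∧
      (∀ s x₃', ∑ x₁', ∑ x₂', R s (x₁', x₂', x₃') = P₃ s.2.2 x₃') ∧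
      (∀ s x₁' x₂', ∑ x₃', R s (x₁', x₂', x₃') = R₁₂ (s.1, s.2.1) (x₁', x₂')) ∧
      (∀ s x₂' x₃', ∑ x₁', R s (x₁', x₂', x₃') = R₂₃ (s.2.1, s.2.2) (x₂', x₃')) ∧
      (∀ p₁ p₂ p₃ : Fin d → ℝ,
        ((∀ x, 0 ≤ p₁ x) ∧ (∑ x, p₁ x = 1) ∧ (∀ x', ∑ x, p₁ x * P₁ x x' = p₁ x') ∧
          ∀ p' : Fin d → ℝ, (∀ x, 0 ≤ p' x) → (∑ x, p' x = 1) →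
            (∀ x', ∑ x, p' x * P₁ x x' = p' x') → p' = p₁) →
        ((∀ x, 0 ≤ p₂ x) ∧ (∑ x, p₂ x = 1) ∧ (∀ x', ∑ x, p₂ x * P₂ x x' = p₂ x') ∧
          ∀ p' : Fin d → ℝ, (∀ x, 0 ≤ p' x) → (∑ x, p' x = 1) →
            (∀ x', ∑ x, p' x * P₂ x x' = p' x') → p' = p₂) →
        ((∀ x, 0 ≤ p₃ x) ∧ (∑ x, p₃ x = 1) ∧ (∀ x', ∑ x, p₃ x * P₃ x x' = p₃ x') ∧
          ∀ p' : Fin d → ℝ, (∀ x, 0 ≤ p' x) → (∑ x, p' x = 1) →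
            (∀ x', ∑ x, p' x * P₃ x x' = p' x') → p' = p₃) →
        ∀ lam : Fin d × Fin d × Fin d → ℝ,
          (∀ s, 0 ≤ lam s) → (∑ s, lam s = 1) →
          (∀ s', ∑ s, lam s * R s s' = lam s') →
          (∀ x₁, ∑ x₂, ∑ x₃, lam (x₁, x₂, x₃) = p₁ x₁) ∧
          (∀ x₂, ∑ x₁, ∑ x₃, lam (x₁, x₂, x₃) = p₂ x₂) ∧
          (∀ x₃, ∑ x₁, ∑ x₂, lam (x₁, x₂, x₃) = p₃ x₃)) :=
  stmt_10_general d P₁ P₂ P₃ R₁₂ R₂₃ hR₁₂ hR₂₃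
end
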